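/- Let X be a characteristic subspace of V for a nilpotent f, with exponent decomposition V = ⟨U_{a_1}⟩ ⊕ ⋯ ⊕ ⟨U_{a_m}⟩. Then X is hyperinvariant if and only if X = (X ∩ ⟨U_{a_1}⟩) ⊕ ⋯ ⊕ (X ∩ ⟨U_{a_m}⟩). -/

import Mathlib

open LinearMap

variable {K : Type*} [Field K] {V : Type*} [AddCommGroup V] [Module K V]

/-- `X` is hyperinvariant for `f`: invariant under every endomorphism commuting with `f`. -/
def Hinv (f : V →ₗ[K] V) (X : Submodule K V) : Prop :=
  ∀ g : V →ₗ[K] V, g ∘ₗ f = f ∘ₗ g → X.map g ≤ X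

/-- `X` is characteristic for `f`: `f`-invariant and fixed by every automorphism commuting with `f`. -/
def Chinv (f : V →ₗ[K] V) (X : Submodule K V) : Prop :=
  X.map f ≤ X ∧
    ∀ α : V ≃ₗ[K] V, (α : V →ₗ[K] V) ∘ₗ f = f ∘ₗ (α : V →ₗ[K] V) →
      X.map (α : V →ₗ[K] V) = X

/-- The cyclic subspace generated by `x`. -/
def cyc (f : V →ₗ[K] V) (x : V) : Submodule K V :=
  Submodule.span K (Set.range fun i : ℕ => (f ^ i) x)

/-- `x` has exponent `ℓ`. -/
def ExpEq (f : V →ₗ[K] V) (x : V) (ℓ : ℕ) : Prop :=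
  (f ^ ℓ) x = 0 ∧ ∀ j < ℓ, (f ^ j) x ≠ 0

/-- `x` has height `q`. -/
def HeightEq (f : V →ₗ[K] V) (x : V) (q : ℕ) : Prop :=
  x ∈ LinearMap.range (f ^ q) ∧ x ∉ LinearMap.range (f ^ (q + 1))

/-- The `r`-th Ulm invariant: number of Jordan blocks of size `r` (for `r ≥ 1`). -/
noncomputable def ulm (f : V →ₗ[K] V) (r : ℕ) : ℕ :=
  Module.finrank K ↥(LinearMap.ker f ⊓ LinearMap.range (f ^ (r - 1))) -
    Module.finrank K ↥(LinearMap.ker f ⊓ LinearMap.range (f ^ r))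

/-- `u` is a generator tuple with exponents `t`. -/
def IsGenTuple {k : ℕ} (f : V →ₗ[K] V) (u : Fin k → V) (t : Fin k → ℕ) : Prop :=
  (∀ i, ExpEq f (u i) (t i)) ∧ DirectSum.IsInternal (fun i => cyc f (u i))

/-- The summand `⟨U_a⟩` of all cyclic subspaces whose generator has exponent `a`. -/
def subU {k : ℕ} (f : V →ₗ[K] V) (u : Fin k → V) (t : Fin k → ℕ) (a : ℕ) : Submodule K V :=
  ⨆ i ∈ {i : Fin k | t i = a}, cyc f (u i)

/-!
Every endomorphism `g` commuting with `f` splits into blocks `π j * g * π i`, where `π i` is the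
projection `hu.proj {i}` onto the cyclic summand of `u i`. An off-diagonal block squares to zero,
so `1` plus it is an automorphism commuting with `f`, and a characteristic `X` is stable under it.
A diagonal block is a polynomial in `f` times `π i`, so everything hinges on `X` being stable under
`π i`. If another generator `u j` has the same exponent, `π i` is the composite of the square-zero
maps `u i ↦ u j` and `u j ↦ u i`; otherwise `π i` is the projection onto `⟨U_{t i}⟩`, and stability
under these is exactly the decomposition `X = ⨆ a, X ⊓ ⟨U_a⟩`. Conversely a hyperinvariant `X` is
stable under every `π i`, which commutes with `f`.
-/

lemma pow_apply_mem_cyc (f : V →ₗ[K] V) (x : V) (j : ℕ) : (f ^ j) x ∈ cyc f x :=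
  Submodule.subset_span ⟨j, rfl⟩

section Cyclic

variable {f : V →ₗ[K] V} {x : V}

lemma cyc_eq_span_fin {ℓ : ℕ} (hx : (f ^ ℓ) x = 0) :
    cyc f x = Submodule.span K (Set.range fun j : Fin ℓ => (f ^ (j : ℕ)) x) := by
  refine le_antisymm (Submodule.span_le.mpr ?_) (Submodule.span_mono ?_)
  · rintro _ ⟨j, rfl⟩
    rcases lt_or_ge j ℓ with hj | hj
    · exact Submodule.subset_span ⟨⟨j, hj⟩, rfl⟩
    · simp [Module.End.pow_map_zero_of_le hj hx]
  · rintro _ ⟨j, rfl⟩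
    exact ⟨j, rfl⟩

lemma exists_aeval_eq_of_mem_cyc {y : V} (hy : y ∈ cyc f x) :
    ∃ q : Polynomial K, y = Polynomial.aeval f q x := by
  induction hy using Submodule.span_induction with
  | mem _ h =>
    obtain ⟨j, rfl⟩ := h
    exact ⟨.X ^ j, by simp⟩
  | zero => exact ⟨0, by simp⟩
  | add _ _ _ _ h₁ h₂ =>
    obtain ⟨q₁, rfl⟩ := h₁
    obtain ⟨q₂, rfl⟩ := h₂
    exact ⟨q₁ + q₂, by simp⟩
  | smul c _ _ h =>
    obtain ⟨q, rfl⟩ := h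
    exact ⟨c • q, by simp⟩

lemma ExpEq.apply_of_succ {n : ℕ} (hx : ExpEq f x (n + 1)) : ExpEq f (f x) n := by
  simp only [ExpEq, ← Module.End.mul_apply, ← pow_succ] at hx ⊢
  exact ⟨hx.1, fun j hj => hx.2 (j + 1) (by omega)⟩

lemma ExpEq.linearIndependent {ℓ : ℕ} (hx : ExpEq f x ℓ) :
    LinearIndependent K fun j : Fin ℓ => (f ^ (j : ℕ)) x := by
  induction ℓ generalizing x with
  | zero => exact linearIndependent_empty_type
  | succ n ih =>
    have htail : Fin.tail (fun j : Fin (n + 1) => (f ^ (j : ℕ)) x) =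
        fun j : Fin n => (f ^ (j : ℕ)) (f x) := by
      ext j
      simp [Fin.tail, pow_succ]
    rw [linearIndependent_finSucc, htail]
    refine ⟨ih hx.apply_of_succ, fun hmem => hx.2 n n.lt_succ_self ?_⟩
    -- `f ^ n` kills `f ^ j (f x)` for every `j`, but not `x`
    have hker : Submodule.span K (Set.range fun j : Fin n => (f ^ (j : ℕ)) (f x)) ≤
        LinearMap.ker (f ^ n) := by
      refine Submodule.span_le.mpr ?_
      rintro _ ⟨j, rfl⟩
      simp only [SetLike.mem_coe, LinearMap.mem_ker, ← Module.End.mul_apply, ← pow_succ, ← pow_add]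
      exact Module.End.pow_map_zero_of_le (by omega) hx.1
    simpa using hker hmem

end Cyclic

namespace Chinv

variable {f : V →ₗ[K] V} {X : Submodule K V}

lemma map_eq_of_isUnit (hX : Chinv f X) {g : Module.End K V} (hg : Commute g f)
    (hunit : IsUnit g) : X.map g = X :=
  hX.2 (LinearEquiv.ofBijective g ((Module.End.isUnit_iff g).mp hunit)) hg

lemma map_le_of_isNilpotent (hX : Chinv f X) {N : Module.End K V} (hN : Commute N f)
    (hnil : IsNilpotent N) : X.map N ≤ X := by
  rintro _ ⟨x, hx, rfl⟩
  have hunit : (1 + N) x ∈ X := by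
    rw [← hX.map_eq_of_isUnit ((Commute.one_left f).add_left hN) hnil.isUnit_one_add]
    exact Submodule.mem_map_of_mem hx
  simpa using X.sub_mem hunit hx

lemma aeval_apply_mem (hX : Chinv f X) (q : Polynomial K) {x : V} (hx : x ∈ X) :
    Polynomial.aeval f q x ∈ X :=
  Polynomial.aeval_apply_smul_mem_of_le_comap hx q f (Submodule.map_le_iff_le_comap.mp hX.1)

end Chinv

namespace IsGenTuple

variable {k : ℕ} {f : V →ₗ[K] V} {u : Fin k → V} {t : Fin k → ℕ} (hu : IsGenTuple f u t)

noncomputable def basis : Module.Basis (Σ i : Fin k, Fin (t i)) K V :=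
  hu.2.collectedBasis fun i =>
    (Module.Basis.span (hu.1 i).linearIndependent).map
      (LinearEquiv.ofEq _ _ (cyc_eq_span_fin (hu.1 i).1).symm)

lemma basis_apply (p : Σ i : Fin k, Fin (t i)) : hu.basis p = (f ^ (p.2 : ℕ)) (u p.1) := by
  simp [basis, DirectSum.IsInternal.collectedBasis_coe, Module.Basis.span_apply]

-- The map with `u i ↦ v i`; it commutes with `f` only when `(f ^ t i) (v i) = 0` for all `i`.
noncomputable def lift (v : Fin k → V) : V →ₗ[K] V :=
  hu.basis.constr K fun p => (f ^ (p.2 : ℕ)) (v p.1)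

variable {v : Fin k → V}

lemma lift_apply_pow (hv : ∀ i, (f ^ t i) (v i) = 0) (i : Fin k) (j : ℕ) :
    hu.lift v ((f ^ j) (u i)) = (f ^ j) (v i) := by
  rcases lt_or_ge j (t i) with hj | hj
  · rw [← show hu.basis ⟨i, ⟨j, hj⟩⟩ = (f ^ j) (u i) from hu.basis_apply _, lift,
      Module.Basis.constr_basis]
  · rw [Module.End.pow_map_zero_of_le hj (hu.1 i).1, Module.End.pow_map_zero_of_le hj (hv i),
      map_zero]

lemma lift_apply_gen (hv : ∀ i, (f ^ t i) (v i) = 0) (i : Fin k) : hu.lift v (u i) = v i := by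
  simpa using hu.lift_apply_pow hv i 0

lemma commute_lift (hv : ∀ i, (f ^ t i) (v i) = 0) : Commute (hu.lift v) f := by
  refine hu.basis.ext fun p => ?_
  simp only [Module.End.mul_apply, hu.basis_apply, ← Module.End.mul_apply f, ← pow_succ',
    hu.lift_apply_pow hv]

lemma lift_eq_of_commute {g : Module.End K V} (hg : Commute g f) :
    hu.lift (fun i => g (u i)) = g := by
  have hv : ∀ i, (f ^ t i) (g (u i)) = 0 := fun i => by
    rw [← Module.End.mul_apply, ← (hg.pow_right _).eq, Module.End.mul_apply, (hu.1 i).1, map_zero]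
  refine hu.basis.ext fun p => ?_
  rw [hu.basis_apply, hu.lift_apply_pow hv, ← Module.End.mul_apply, ← (hg.pow_right _).eq,
    Module.End.mul_apply]

lemma lift_mul_lift {w : Fin k → V} (hv : ∀ i, (f ^ t i) (v i) = 0)
    (hw : ∀ i, (f ^ t i) (w i) = 0) :
    hu.lift v * hu.lift w = hu.lift fun i => hu.lift v (w i) := by
  rw [← hu.lift_eq_of_commute ((hu.commute_lift hv).mul_left (hu.commute_lift hw))]
  simp only [Module.End.mul_apply, hu.lift_apply_gen hw]

lemma lift_zero : hu.lift 0 = 0 := by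
  simp only [lift, Pi.zero_apply, map_zero]
  exact map_zero _

include hu in
lemma pow_single_eq_zero {i j : Fin k} (h : t j ≤ t i) (p : Fin k) :
    (f ^ t p) ((Pi.single i (u j) : Fin k → V) p) = 0 := by
  rcases eq_or_ne p i with rfl | hp
  · simpa using Module.End.pow_map_zero_of_le h (hu.1 j).1
  · simp [hp]

noncomputable def proj (s : Set (Fin k)) : V →ₗ[K] V :=
  hu.lift (s.indicator u)

include hu in
lemma pow_indicator_eq_zero (s : Set (Fin k)) (i : Fin k) : (f ^ t i) (s.indicator u i) = 0 := by
  by_cases hi : i ∈ s <;> simp [hi, (hu.1 i).1]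

lemma proj_apply_pow (s : Set (Fin k)) (i : Fin k) (j : ℕ) :
    hu.proj s ((f ^ j) (u i)) = (f ^ j) (s.indicator u i) :=
  hu.lift_apply_pow (hu.pow_indicator_eq_zero s) i j

lemma proj_apply_gen (s : Set (Fin k)) (i : Fin k) : hu.proj s (u i) = s.indicator u i :=
  hu.lift_apply_gen (hu.pow_indicator_eq_zero s) i

lemma commute_proj (s : Set (Fin k)) : Commute (hu.proj s) f :=
  hu.commute_lift (hu.pow_indicator_eq_zero s)

lemma proj_mul_proj (s s' : Set (Fin k)) : hu.proj s * hu.proj s' = hu.proj (s ∩ s') := by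
  rw [← hu.lift_eq_of_commute ((hu.commute_proj s).mul_left (hu.commute_proj s'))]
  show _ = hu.lift _
  congr 1
  ext i
  by_cases hi : i ∈ s' <;> by_cases hi' : i ∈ s <;> simp [hi, hi', hu.proj_apply_gen]

lemma proj_mul_proj_of_disjoint {s s' : Set (Fin k)} (h : Disjoint s s') :
    hu.proj s * hu.proj s' = 0 := by
  rw [hu.proj_mul_proj, h.inter_eq, ← hu.lift_eq_of_commute (Commute.zero_left f)]
  simp [proj]

lemma sum_proj_singleton : ∑ i, hu.proj {i} = 1 := by
  rw [← hu.lift_eq_of_commute (Commute.sum_left _ _ _ fun i _ => hu.commute_proj {i}),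
    ← hu.lift_eq_of_commute (Commute.one_left f)]
  congr 1
  ext i
  simp [hu.proj_apply_gen]

lemma proj_apply_mem_iSup (s : Set (Fin k)) (x : V) :
    hu.proj s x ∈ ⨆ i ∈ s, cyc f (u i) := by
  have hrange : (⊤ : Submodule K V).map (hu.proj s) ≤ ⨆ i ∈ s, cyc f (u i) := by
    rw [← hu.basis.span_eq, Submodule.map_span, Submodule.span_le]
    rintro _ ⟨_, ⟨p, rfl⟩, rfl⟩
    rw [hu.basis_apply, hu.proj_apply_pow]
    by_cases hp : p.1 ∈ s
    · rw [Set.indicator_of_mem hp]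
      exact Submodule.mem_iSup_of_mem p.1 (Submodule.mem_iSup_of_mem hp (pow_apply_mem_cyc f _ _))
    · simp [hp]
  exact hrange ⟨x, trivial, rfl⟩

lemma proj_apply_of_mem_iSup {s : Set (Fin k)} {y : V} (hy : y ∈ ⨆ i ∈ s, cyc f (u i)) :
    hu.proj s y = y := by
  suffices h : ⨆ i ∈ s, cyc f (u i) ≤ LinearMap.eqLocus (hu.proj s) LinearMap.id from h hy
  refine iSup₂_le fun i hi => Submodule.span_le.mpr ?_
  rintro _ ⟨j, rfl⟩
  simp [hu.proj_apply_pow, hi]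

lemma exists_proj_mul_mul_proj_eq {g : Module.End K V} (hg : Commute g f) (i : Fin k) :
    ∃ q : Polynomial K, hu.proj {i} * g * hu.proj {i} = Polynomial.aeval f q * hu.proj {i} := by
  have hmem : hu.proj {i} (g (u i)) ∈ cyc f (u i) := by
    simpa using hu.proj_apply_mem_iSup {i} (g (u i))
  obtain ⟨q, hq⟩ := exists_aeval_eq_of_mem_cyc hmem
  have hq_comm : Commute (Polynomial.aeval f q) f := by
    simpa using (Commute.all q .X).map (Polynomial.aeval f)
  refine ⟨q, ?_⟩
  rw [← hu.lift_eq_of_commute (((hu.commute_proj _).mul_left hg).mul_left (hu.commute_proj _)),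
    ← hu.lift_eq_of_commute (hq_comm.mul_left (hu.commute_proj _))]
  congr 1
  ext p
  rcases eq_or_ne p i with rfl | hp
  · simpa [hu.proj_apply_gen] using hq
  · simp [hu.proj_apply_gen, hp]

lemma isNilpotent_proj_mul_mul_proj {s s' : Set (Fin k)} (h : Disjoint s s')
    (g : Module.End K V) : IsNilpotent (hu.proj s' * g * hu.proj s) := by
  refine ⟨2, ?_⟩
  calc (hu.proj s' * g * hu.proj s) ^ 2
      = hu.proj s' * g * (hu.proj s * hu.proj s') * g * hu.proj s := by simp only [sq, mul_assoc]
    _ = 0 := by rw [hu.proj_mul_proj_of_disjoint h]; simp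

lemma eq_iSup_inf_subU_of_map_proj_singleton_le {X : Submodule K V}
    (h : ∀ i, X.map (hu.proj {i}) ≤ X) : X = ⨆ a ∈ Set.range t, X ⊓ subU f u t a := by
  refine le_antisymm (fun x hx => ?_) (iSup₂_le fun _ _ => inf_le_left)
  have hsum : x = ∑ i, hu.proj {i} x := by
    rw [← LinearMap.sum_apply, hu.sum_proj_singleton, Module.End.one_apply]
  have hcomp : ∀ i, hu.proj {i} x ∈ X ⊓ subU f u t (t i) := by
    intro i
    have hle : ⨆ j ∈ ({i} : Set (Fin k)), cyc f (u j) ≤ subU f u t (t i) :=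
      biSup_mono fun j hj => congrArg t hj
    exact ⟨h i ⟨x, hx, rfl⟩, hle (hu.proj_apply_mem_iSup {i} x)⟩
  rw [hsum]
  exact Submodule.sum_mem _ fun i _ =>
    Submodule.mem_iSup_of_mem (t i) (Submodule.mem_iSup_of_mem ⟨i, rfl⟩ (hcomp i))

lemma map_proj_fiber_le_of_eq_iSup {X : Submodule K V}
    (hdec : X = ⨆ a ∈ Set.range t, X ⊓ subU f u t a) (a : ℕ) :
    X.map (hu.proj {i | t i = a}) ≤ X := by
  rw [Submodule.map_le_iff_le_comap]
  conv_lhs => rw [hdec]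
  refine iSup₂_le fun b _ y hy => ?_
  rw [Submodule.mem_comap]
  rcases eq_or_ne b a with rfl | hab
  · rw [hu.proj_apply_of_mem_iSup hy.2]
    exact hy.1
  · have hdisj : Disjoint {i | t i = a} {i | t i = b} :=
      Set.disjoint_left.mpr fun i ha hb => hab (hb.symm.trans ha)
    rw [← hu.proj_apply_of_mem_iSup hy.2, ← Module.End.mul_apply,
      hu.proj_mul_proj_of_disjoint hdisj]
    exact X.zero_mem

lemma isNilpotent_lift_single {i j : Fin k} (hji : j ≠ i) (h : t j ≤ t i) :
    IsNilpotent (hu.lift (Pi.single i (u j))) := by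
  have hv := hu.pow_single_eq_zero h
  refine ⟨2, ?_⟩
  rw [sq, hu.lift_mul_lift hv hv, ← hu.lift_zero]
  congr 1
  ext p
  rcases eq_or_ne p i with rfl | hp
  · simp [hu.lift_apply_gen hv, hji]
  · simp [hp]

lemma lift_single_mul_lift_single {i j : Fin k} (h : t j = t i) :
    hu.lift (Pi.single j (u i)) * hu.lift (Pi.single i (u j)) = hu.proj {i} := by
  rw [hu.lift_mul_lift (hu.pow_single_eq_zero h.ge) (hu.pow_single_eq_zero h.le), IsGenTuple.proj]
  congr 1
  ext p
  rcases eq_or_ne p i with rfl | hp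
  · simp [hu.lift_apply_gen (hu.pow_single_eq_zero h.ge)]
  · simp [hp]

end IsGenTuple

namespace Chinv

variable {k : ℕ} {f : V →ₗ[K] V} {u : Fin k → V} {t : Fin k → ℕ} {X : Submodule K V}

lemma map_proj_singleton_le (hX : Chinv f X) (hu : IsGenTuple f u t)
    (hfiber : ∀ a, X.map (hu.proj {i | t i = a}) ≤ X) (i : Fin k) :
    X.map (hu.proj {i}) ≤ X := by
  by_cases hrep : ∃ j ≠ i, t j = t i
  · obtain ⟨j, hji, htj⟩ := hrep
    have hto := hX.map_le_of_isNilpotent (hu.commute_lift (hu.pow_single_eq_zero htj.le))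
      (hu.isNilpotent_lift_single hji htj.le)
    have hback := hX.map_le_of_isNilpotent (hu.commute_lift (hu.pow_single_eq_zero htj.ge))
      (hu.isNilpotent_lift_single hji.symm htj.ge)
    rw [← hu.lift_single_mul_lift_single htj, Module.End.mul_eq_comp, Submodule.map_comp]
    exact (Submodule.map_mono hto).trans hback
  · have hfiber_eq : {j | t j = t i} = {i} :=
      Set.ext fun j => ⟨fun hj => by_contra fun hji => hrep ⟨j, hji, hj⟩, fun hj => congrArg t hj⟩
    simpa [hfiber_eq] using hfiber (t i)

lemma hinv_of_map_proj_fiber_le (hX : Chinv f X) (hu : IsGenTuple f u t)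
    (hfiber : ∀ a, X.map (hu.proj {i | t i = a}) ≤ X) : Hinv f X := by
  intro g hg
  replace hg : Commute g f := hg
  have hblocks : g = ∑ j, ∑ i, hu.proj {j} * g * hu.proj {i} := by
    simp only [← Finset.mul_sum, ← Finset.sum_mul, hu.sum_proj_singleton, one_mul, mul_one]
  rintro _ ⟨x, hx, rfl⟩
  rw [hblocks]
  simp only [LinearMap.sum_apply]
  refine X.sum_mem fun j _ => X.sum_mem fun i _ => ?_
  rcases eq_or_ne j i with rfl | hji
  · obtain ⟨q, hq⟩ := hu.exists_proj_mul_mul_proj_eq hg j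
    rw [hq, Module.End.mul_apply]
    exact hX.aeval_apply_mem q (hX.map_proj_singleton_le hu hfiber j ⟨x, hx, rfl⟩)
  · have hdisj : Disjoint ({i} : Set (Fin k)) {j} := Set.disjoint_singleton.mpr hji.symm
    refine hX.map_le_of_isNilpotent ?_ (hu.isNilpotent_proj_mul_mul_proj hdisj g) ⟨x, hx, rfl⟩
    exact ((hu.commute_proj _).mul_left hg).mul_left (hu.commute_proj _)

end Chinv

theorem stmt6_general (f : V →ₗ[K] V)
    {k : ℕ} (u : Fin k → V) (t : Fin k → ℕ) (hu : IsGenTuple f u t)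
    (X : Submodule K V) (hX : Chinv f X) :
    Hinv f X ↔ X = ⨆ a ∈ Set.range t, X ⊓ subU f u t a :=
  ⟨fun hH => hu.eq_iSup_inf_subU_of_map_proj_singleton_le fun i => hH _ (hu.commute_proj {i}),
    fun hdec => hX.hinv_of_map_proj_fiber_le hu (hu.map_proj_fiber_le_of_eq_iSup hdec)⟩

theorem stmt6 [FiniteDimensional K V] (f : V →ₗ[K] V) (hf : IsNilpotent f)
    {k : ℕ} (u : Fin k → V) (t : Fin k → ℕ) (ht : Monotone t) (hu : IsGenTuple f u t)
    (X : Submodule K V) (hX : Chinv f X) :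
    Hinv f X ↔ X = ⨆ a ∈ Set.range t, X ⊓ subU f u t a :=
  stmt6_general f u t hu X hX
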